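/- For every 3-CNF formula φ with n variables and m clauses (each clause having three literals over distinct variables and no clause containing a variable together with its negation), every index i ∈ {1, ..., m}, and every word v ∈ {a,b}* with |v| = n, the value δ_φ(c̄_i^{x_1}, v) is defined and belongs to {c_i^{end}, c̄_i^{end}}. -/

import Mathlib

namespace PaperSync

variable {Q A : Type*}

/-- The extension of a partial transition function `δ : Q → A → Option Q` to words. -/
def wordMap (δ : Q → A → Option Q) : Q → List A → Option Q
  | q, [] => some q
  | q, x :: w => (δ q x).bind fun q' => wordMap δ q' w

/-- A word `w` carefully synchronizes the PFA `δ`: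
`δ(q, w)` is defined for every state and all values agree. -/
def CarefullySync (δ : Q → A → Option Q) (w : List A) : Prop :=
  ∃ qbar : Q, ∀ q : Q, wordMap δ q w = some qbar

open Classical in
/-- The image of a set of states under a word: defined iff `δ(q,w)` is defined
for all `q ∈ S`, in which case it is `{δ(q,w) : q ∈ S}`. -/
noncomputable def setImage (δ : Q → A → Option Q) (S : Set Q) (w : List A) :
    Option (Set Q) :=
  if ∀ q ∈ S, (wordMap δ q w).isSome then
    some {q' | ∃ q ∈ S, wordMap δ q w = some q'}
  else none

/-- A PFA is one-cluster with respect to a letter `a`: `a` is defined at every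
state and the functional digraph `G_a` of `a` has exactly one weakly connected
component. -/
def OneCluster (δ : Q → A → Option Q) (a : A) : Prop :=
  (∀ q : Q, (δ q a).isSome) ∧
  ∀ p q : Q, Relation.EqvGen (fun u v => δ u a = some v) p q

/-- The vertex set of the `a`-cycle: states returning to themselves under some
positive power of `a`. -/
def cycleSet (δ : Q → A → Option Q) (a : A) : Set Q :=
  {q | ∃ k : ℕ, 1 ≤ k ∧ wordMap δ q (List.replicate k a) = some q}

/-- The level of a state: the least `k` with `δ(q, a^k)` on the `a`-cycle. -/
noncomputable def levelOf (δ : Q → A → Option Q) (a : A) (q : Q) : ℕ :=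
  sInf {k | ∃ p ∈ cycleSet δ a, wordMap δ q (List.replicate k a) = some p}

/-- The level of `G_a`: the maximal level of a state. -/
noncomputable def levelG [Fintype Q] (δ : Q → A → Option Q) (a : A) : ℕ :=
  Finset.univ.sup (levelOf δ a)

/-- The binary alphabet `{a, b}` of `A_φ`. -/
inductive AB | a | b
deriving DecidableEq

instance instFintypeAB : Fintype AB :=
  Fintype.ofList [AB.a, AB.b] (by intro x; cases x <;> simp)

/-- The states of `A_φ` for a 3-CNF formula with `n` variables and `m`
clauses: `p i` is `p_{i+1}`, `r i` is `r_{i+1}`, `ct i j` is `c_{i+1}^{x_{j+1}}`,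
`cf i j` is `c̄_{i+1}^{x_{j+1}}`, `ctend i` is `c_{i+1}^{end}`, and `cfend i` is
`c̄_{i+1}^{end}`. -/
inductive StQ (n m : ℕ)
  | p (i : Fin m)
  | r (i : Fin m)
  | ct (i : Fin m) (j : Fin n)
  | cf (i : Fin m) (j : Fin n)
  | ctend (i : Fin m)
  | cfend (i : Fin m)
deriving DecidableEq, Fintype

/-- The transition function of `A_φ`, where the formula `φ` is given by its
clauses `Cl i ⊆ Fin n × Bool` (a literal `(j, tt)` is `x_{j+1}`, a literal
`(j, ff)` is `¬x_{j+1}`). -/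
def dphi (n m : ℕ) (hn : 0 < n) (Cl : Fin m → Finset (Fin n × Bool)) :
    StQ n m → AB → Option (StQ n m)
  | .p i, .a => some (.p ⟨(i.val + 1) % m, Nat.mod_lt _ i.pos⟩)
  | .p i, .b => some (.cf i ⟨0, hn⟩)
  | .r i, .a => some (.p i)
  | .r _, .b => none
  | .ctend i, .a => some (.r i)
  | .ctend i, .b => some (.p ⟨0, i.pos⟩)
  | .cfend i, .a => some (.r i)
  | .cfend _, .b => none
  | .ct i j, _ =>
      some (if h : j.val + 1 < n then .ct i ⟨j.val + 1, h⟩ else .ctend i)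
  | .cf i j, .a =>
      some (if h : j.val + 1 < n then
          (if (j, true) ∈ Cl i then .ct i ⟨j.val + 1, h⟩ else .cf i ⟨j.val + 1, h⟩)
        else (if (j, true) ∈ Cl i then .ctend i else .cfend i))
  | .cf i j, .b =>
      some (if h : j.val + 1 < n then
          (if (j, false) ∈ Cl i then .ct i ⟨j.val + 1, h⟩ else .cf i ⟨j.val + 1, h⟩)
        else (if (j, false) ∈ Cl i then .ctend i else .cfend i))

/-- Every clause consists of exactly three literals over pairwise distinct
variables (in particular no clause contains both a variable and its
negation). -/
def GoodClauses (n m : ℕ) (Cl : Fin m → Finset (Fin n × Bool)) : Prop :=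
  ∀ i : Fin m, (Cl i).card = 3 ∧ ((Cl i).image Prod.fst).card = 3

/-- The set `S_init = {c̄_1^{x_1}, …, c̄_m^{x_1}}`. -/
def Sinit (n m : ℕ) (hn : 0 < n) : Set (StQ n m) :=
  Set.range fun i : Fin m => StQ.cf i ⟨0, hn⟩

/-- The set `S_end = {c_1^{end}, …, c_m^{end}}`. -/
def Send (n m : ℕ) : Set (StQ n m) :=
  Set.range StQ.ctend

lemma ct_lem (n m : ℕ) (hn : 0 < n) (Cl : Fin m → Finset (Fin n × Bool))
    (i : Fin m) :
    ∀ (v : List AB) (j : Fin n), v.length + j.val = n →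
      wordMap (dphi n m hn Cl) (StQ.ct i j) v = some (StQ.ctend i) := by
  intro v
  induction v with
  | nil => intro j hj; have := j.isLt; simp at hj; omega
  | cons x w ih =>
    intro j hj
    simp only [wordMap, dphi, Option.bind_some]
    by_cases h : j.val + 1 < n
    · rw [dif_pos h]
      exact ih ⟨j.val + 1, h⟩ (by simp only [Fin.val_mk]; simp at hj; omega)
    · rw [dif_neg h]
      have hw : w.length = 0 := by simp at hj; omega
      rw [List.eq_nil_of_length_eq_zero hw]; rfl

lemma cf_lem (n m : ℕ) (hn : 0 < n) (Cl : Fin m → Finset (Fin n × Bool))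
    (i : Fin m) :
    ∀ (v : List AB) (j : Fin n), v.length + j.val = n →
      wordMap (dphi n m hn Cl) (StQ.cf i j) v = some (StQ.ctend i) ∨
      wordMap (dphi n m hn Cl) (StQ.cf i j) v = some (StQ.cfend i) := by
  intro v
  induction v with
  | nil => intro j hj; have := j.isLt; simp at hj; omega
  | cons x w ih =>
    intro j hj
    have hw : x = AB.a ∨ x = AB.b := by cases x <;> simp
    rcases hw with rfl | rfl <;>
    · simp only [wordMap, dphi, Option.bind_some]
      by_cases h : j.val + 1 < n
      · rw [dif_pos h]
        split
        · exact Or.inl (ct_lem n m hn Cl i w ⟨j.val + 1, h⟩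
            (by simp only [Fin.val_mk]; simp at hj; omega))
        · exact ih ⟨j.val + 1, h⟩ (by simp only [Fin.val_mk]; simp at hj; omega)
      · rw [dif_neg h]
        have hw0 : w.length = 0 := by simp at hj; omega
        rw [List.eq_nil_of_length_eq_zero hw0]
        split
        · exact Or.inl rfl
        · exact Or.inr rfl

/-- for every 3-CNF formula `φ`, every clause index `i` and every
word `v ∈ {a,b}*` of length `n`, the value `δ_φ(c̄_i^{x_1}, v)` is defined and
belongs to `{c_i^{end}, c̄_i^{end}}`. -/
theorem Aphi_length_n_word (n m : ℕ) (hn : 0 < n)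
    (Cl : Fin m → Finset (Fin n × Bool)) (hCl : GoodClauses n m Cl)
    (i : Fin m) (v : List AB) (hv : v.length = n) :
    wordMap (dphi n m hn Cl) (StQ.cf i ⟨0, hn⟩) v = some (StQ.ctend i) ∨
    wordMap (dphi n m hn Cl) (StQ.cf i ⟨0, hn⟩) v = some (StQ.cfend i) := by
  exact cf_lem n m hn Cl i v ⟨0, hn⟩ (by simpa using hv)

end PaperSync
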